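/- arXiv:1108.3713 — 3 statements merged into one kernel-verified Lean document; each statement's English description precedes it below -/
import Mathlib

section
/- Let U be an open subset of ℂⁿ (functions Fin n → ℂ) and let f, w : (Fin n → ℂ) → ℂ be C^∞ on U. Assume 0 is a regular value of w on U and that f vanishes at every point of U where w vanishes. Then for every p ∈ U there exist an open neighborhood V ⊆ U of p and a constant C ≥ 0 such that |f(z)| ≤ C * |w(z)| for all z ∈ V. (In particular the quotient f/w is locally bounded on U.) -/
open Filter Topology


/-- If `f` and `w` are smooth on `U`, `0` is a regular value of `w` on `U`, and
`f` vanishes wherever `w` does, then `|f| ≤ C |w|` locally on `U`. -/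
theorem locally_bounded_quotient (n : ℕ) (U : Set (Fin n → ℂ)) (hU : IsOpen U)
    (f w : (Fin n → ℂ) → ℂ)
    (hf : ContDiffOn ℝ (⊤ : ℕ∞) f U) (hw : ContDiffOn ℝ (⊤ : ℕ∞) w U)
    (hreg : ∀ p ∈ U, w p = 0 → Function.Surjective (fderiv ℝ w p))
    (hsub : ∀ p ∈ U, w p = 0 → f p = 0) :
    ∀ p ∈ U, ∃ V : Set (Fin n → ℂ), V ⊆ U ∧ IsOpen V ∧ p ∈ V ∧
      ∃ C : ℝ, 0 ≤ C ∧ ∀ z ∈ V, ‖f z‖ ≤ C * ‖w z‖ := by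
  intro p hp
  have hUp : U ∈ 𝓝 p := hU.mem_nhds hp
  by_cases hwp : w p = 0
  · -- hard case: `w p = 0`, use the inverse function theorem
    set A : (Fin n → ℂ) →L[ℝ] ℂ := fderiv ℝ w p with hA
    obtain ⟨B₀, hB₀⟩ := LinearMap.exists_rightInverse_of_surjective (A : (Fin n → ℂ) →ₗ[ℝ] ℂ)
      (LinearMap.range_eq_top.2 (hreg p hp hwp))
    set B : ℂ →L[ℝ] (Fin n → ℂ) := LinearMap.toContinuousLinearMap B₀ with hB
    have hAB : ∀ y, A (B y) = y := fun y => LinearMap.congr_fun hB₀ y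
    have hwstrict : HasStrictFDerivAt w A p :=
      (hw.contDiffAt hUp).hasStrictFDerivAt (by simp)
    set Φ : (Fin n → ℂ) → (Fin n → ℂ) := fun x => x - B (A x) + B (w x) with hΦdef
    have hΦ : HasStrictFDerivAt Φ
        ((ContinuousLinearEquiv.refl ℝ (Fin n → ℂ) : (Fin n → ℂ) ≃L[ℝ] (Fin n → ℂ)) : (Fin n → ℂ) →L[ℝ] (Fin n → ℂ)) p := by
      have h1 : HasStrictFDerivAt Φ
          (ContinuousLinearMap.id ℝ (Fin n → ℂ) - B.comp A + B.comp A) p :=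
        ((hasStrictFDerivAt_id p).sub (B.comp A).hasStrictFDerivAt).add
          (B.hasStrictFDerivAt.comp p hwstrict)
      have h2 : ContinuousLinearMap.id ℝ (Fin n → ℂ) - B.comp A + B.comp A
          = ContinuousLinearMap.id ℝ (Fin n → ℂ) := by abel
      rw [h2] at h1
      simpa using h1
    set g : (Fin n → ℂ) → (Fin n → ℂ) := hΦ.localInverse Φ _ p with hg
    -- the identity `A (Φ x) = w x`
    have hwΦ : ∀ x, A (Φ x) = w x := by
      intro x
      simp [hΦdef, map_add, map_sub, hAB]
    -- Lipschitz bounds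
    obtain ⟨Kf, s, hs, hfs⟩ :=
      ((hf.contDiffAt hUp).hasStrictFDerivAt (by simp)).exists_lipschitzOnWith
    obtain ⟨Kg, t, ht, hgt⟩ := hΦ.to_localInverse.exists_lipschitzOnWith
    -- the "vertical projection" y₀
    set Bc : (Fin n → ℂ) →L[ℝ] (Fin n → ℂ) := ContinuousLinearMap.id ℝ (Fin n → ℂ) - B.comp A with hBc
    have hBcapp : ∀ z, Bc z = z - B (A z) := fun z => by simp [hBc]
    have hBcΦ : ∀ z, Φ z - Bc z = B (w z) := by
      intro z
      rw [hBcapp]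
      simp only [hΦdef]
      abel
    have hBcp : Bc p = Φ p := by
      rw [hBcapp]
      simp [hΦdef, hwp]
    have hBccont : ContinuousAt Bc p := Bc.continuous.continuousAt
    have hgΦp : g (Φ p) = p := hΦ.localInverse_apply_image
    have hgcont : ContinuousAt g (Φ p) := hΦ.localInverse_continuousAt
    -- combine all eventual conditions
    have hP : ∀ᶠ z in 𝓝 p, z ∈ U ∧ z ∈ s ∧ Φ z ∈ t ∧ Bc z ∈ t ∧
        Φ (g (Bc z)) = Bc z ∧ (g (Bc z) ∈ U ∧ g (Bc z) ∈ s) ∧ g (Φ z) = z := by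
      have e1 : ∀ᶠ z in 𝓝 p, z ∈ U := hUp
      have e2 : ∀ᶠ z in 𝓝 p, z ∈ s := hs
      have e3 : ∀ᶠ z in 𝓝 p, Φ z ∈ t := hΦ.continuousAt.eventually_mem ht
      have e4 : ∀ᶠ z in 𝓝 p, Bc z ∈ t :=
        hBccont.eventually_mem (by rwa [hBcp])
      have e5 : ∀ᶠ z in 𝓝 p, Φ (g (Bc z)) = Bc z := by
        have : Filter.Tendsto Bc (𝓝 p) (𝓝 (Φ p)) := by
          rw [← hBcp]; exact hBccont
        exact this.eventually hΦ.eventually_right_inverse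
      have e6 : ∀ᶠ z in 𝓝 p, g (Bc z) ∈ U ∧ g (Bc z) ∈ s := by
        have hc : ContinuousAt (fun z => g (Bc z)) p := by
          refine ContinuousAt.comp ?_ hBccont
          rwa [hBcp]
        have hv : (fun z => g (Bc z)) p = p := by
          simp only [hBcp, hgΦp]
        have hUs : U ∩ s ∈ 𝓝 ((fun z => g (Bc z)) p) := by
          rw [hv]; exact Filter.inter_mem hUp hs
        filter_upwards [hc.eventually_mem hUs] with z hz using hz
      have e7 : ∀ᶠ z in 𝓝 p, g (Φ z) = z := hΦ.eventually_left_inverse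
      filter_upwards [e1, e2, e3, e4, e5, e6, e7] with z h1 h2 h3 h4 h5 h6 h7
      exact ⟨h1, h2, h3, h4, h5, h6, h7⟩
    obtain ⟨V, hVsub, hVopen, hpV⟩ := mem_nhds_iff.1 hP
    refine ⟨V, fun z hz => (hVsub hz).1, hVopen, hpV, (Kf : ℝ) * Kg * ‖B‖, by positivity, ?_⟩
    intro z hz
    obtain ⟨hz1, hz2, hz3, hz4, hz5, ⟨hz6U, hz6s⟩, hz7⟩ := hVsub hz
    set z₀ : (Fin n → ℂ) := g (Bc z) with hz₀
    -- `w z₀ = 0`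
    have hwz₀ : w z₀ = 0 := by
      have : A (Φ z₀) = 0 := by
        rw [hz5]
        simp [hBc, map_sub, hAB]
      rwa [hwΦ] at this
    have hfz₀ : f z₀ = 0 := hsub z₀ hz6U hwz₀
    -- distance estimates
    have hd1 : dist z z₀ ≤ (Kg : ℝ) * dist (Φ z) (Bc z) := by
      have h := hgt.dist_le_mul (Φ z) hz3 (Bc z) hz4
      rw [← hg] at h
      rwa [hz7] at h
    have hd2 : dist (Φ z) (Bc z) ≤ ‖B‖ * ‖w z‖ := by
      rw [dist_eq_norm, hBcΦ z]
      have := B.le_opNorm (w z)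
      simpa using this
    have hd3 : ‖f z‖ ≤ (Kf : ℝ) * dist z z₀ := by
      have := hfs.dist_le_mul z hz2 z₀ hz6s
      rw [hfz₀] at this
      simpa [dist_eq_norm] using this
    calc ‖f z‖ ≤ (Kf : ℝ) * dist z z₀ := hd3
      _ ≤ (Kf : ℝ) * ((Kg : ℝ) * dist (Φ z) (Bc z)) := by
          exact mul_le_mul_of_nonneg_left hd1 (by positivity)
      _ ≤ (Kf : ℝ) * ((Kg : ℝ) * (‖B‖ * ‖w z‖)) := by
          refine mul_le_mul_of_nonneg_left ?_ (by positivity)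
          exact mul_le_mul_of_nonneg_left hd2 (by positivity)
      _ = (Kf : ℝ) * Kg * ‖B‖ * ‖w z‖ := by ring
  · -- easy case: `w p ≠ 0`
    have hwc : ContinuousAt w p := hw.continuousOn.continuousAt hUp
    have hfc : ContinuousAt f p := hf.continuousOn.continuousAt hUp
    have habs : 0 < ‖w p‖ := norm_pos_iff.2 hwp
    have e1 : ∀ᶠ z in 𝓝 p, ‖w p‖ / 2 < ‖w z‖ :=
      (continuous_norm.continuousAt.comp hwc).eventually
        (eventually_gt_nhds (by simp only [Function.comp_apply]; linarith))
    have e2 : ∀ᶠ z in 𝓝 p, ‖f z‖ < ‖f p‖ + 1 :=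
      (continuous_norm.continuousAt.comp hfc).eventually
        (eventually_lt_nhds (by simp only [Function.comp_apply]; linarith [norm_nonneg (f p)]))
    have hP : ∀ᶠ z in 𝓝 p, z ∈ U ∧ ‖w p‖ / 2 < ‖w z‖ ∧
        ‖f z‖ < ‖f p‖ + 1 := by
      filter_upwards [hUp, e1, e2] with z h1 h2 h3 using ⟨h1, h2, h3⟩
    obtain ⟨V, hVsub, hVopen, hpV⟩ := mem_nhds_iff.1 hP
    refine ⟨V, fun z hz => (hVsub hz).1, hVopen, hpV,
      (‖f p‖ + 1) / (‖w p‖ / 2), by positivity, ?_⟩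
    intro z hz
    obtain ⟨-, h2, h3⟩ := hVsub hz
    have hC : 0 < ‖w p‖ / 2 := by linarith
    rw [div_mul_eq_mul_div, le_div_iff₀ hC] at *
    nlinarith [norm_nonneg (f z), norm_nonneg (w z)]
end

section
/- Let P ⊆ ℝᵐ be an integral affine polytope and let S be a subset of A(P) which contains 0, is closed under addition, and is disjoint from A⁺(P) (equivalently: every element of S, being nonnegative on P, has at least one zero in P). Then the elements of S have a common zero: there exists a point x ∈ P with f(x) = 0 for every f ∈ S. -/
/-!
Pick `f₀ ∈ S` whose zero set `Z f₀` in `P` spans an affine subspace of minimal dimension, and a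
zero `x₀` of `f₀` in `P`. For `g ∈ S`, nonnegativity gives `Z (f₀ + g) = Z f₀ ∩ Z g`; this set is
nonempty and, by minimality, spans the same affine subspace as `Z f₀`, so it contains `x₀` in its
affine span. Being affine and zero on `Z (f₀ + g)`, the function `g` vanishes on that span, so
`g x₀ = 0`.
-/

/-- An integral affine function on `ℝᵐ`. -/
def IntegralAffine (m : ℕ) (f : (Fin m → ℝ) → ℝ) : Prop :=
  ∃ (n : Fin m → ℤ) (y : ℝ), f = fun x => (∑ i, (n i : ℝ) * x i) + y

/-- `A(P)`: integral affine functions nonnegative on `P`. -/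
def affNonneg (m : ℕ) (P : Set (Fin m → ℝ)) : Set ((Fin m → ℝ) → ℝ) :=
  {f | IntegralAffine m f ∧ ∀ x ∈ P, 0 ≤ f x}

/-- `A⁺(P)`: integral affine functions strictly positive on `P`. -/
def affPos (m : ℕ) (P : Set (Fin m → ℝ)) : Set ((Fin m → ℝ) → ℝ) :=
  {f | IntegralAffine m f ∧ ∀ x ∈ P, 0 < f x}

/-- An integral affine polytope: a nonempty finite intersection of sets
`{f ≥ 0}` or `{f > 0}` with `f` integral affine. -/
def IsIntegralAffinePolytope (m : ℕ) (P : Set (Fin m → ℝ)) : Prop :=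
  P.Nonempty ∧ ∃ (k : ℕ) (f : Fin k → ((Fin m → ℝ) → ℝ)) (strict : Fin k → Bool),
    (∀ i, IntegralAffine m (f i)) ∧
    P = {x | ∀ i, if strict i then 0 < f i x else 0 ≤ f i x}

open Module

lemma sep_add_eq_zero_eq_inter {α M : Type*} [AddCommMonoid M] [PartialOrder M]
    [IsOrderedAddMonoid M] {s : Set α} {f g : α → M}
    (hf : ∀ x ∈ s, 0 ≤ f x) (hg : ∀ x ∈ s, 0 ≤ g x) :
    {x ∈ s | (f + g) x = 0} = {x ∈ s | f x = 0} ∩ {x ∈ s | g x = 0} := by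
  ext x
  simp only [Set.mem_sep_iff, Set.mem_inter_iff, Pi.add_apply]
  constructor
  · rintro ⟨hx, hsum⟩
    have := (add_eq_zero_iff_of_nonneg (hf x hx) (hg x hx)).mp hsum
    exact ⟨⟨hx, this.1⟩, hx, this.2⟩
  · rintro ⟨⟨hx, hfx⟩, -, hgx⟩
    exact ⟨hx, by rw [hfx, hgx, add_zero]⟩

lemma affineSpan_eq_of_subset_of_finrank_le {k V Q : Type*} [DivisionRing k] [AddCommGroup V]
    [Module k V] [FiniteDimensional k V] [AddTorsor V Q] {s t : Set Q} (hs : s.Nonempty)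
    (hst : s ⊆ t)
    (h : finrank k (affineSpan k t).direction ≤ finrank k (affineSpan k s).direction) :
    affineSpan k s = affineSpan k t :=
  have hle := affineSpan_mono k hst
  AffineSubspace.eq_of_direction_eq_of_nonempty_of_le
    (Submodule.eq_of_le_of_finrank_le (AffineSubspace.direction_le hle) h)
    ((affineSpan_nonempty k).mpr hs) hle

theorem exists_common_zero_of_add_mem {k V Q : Type*} [Field k] [LinearOrder k]
    [IsStrictOrderedRing k] [AddCommGroup V] [Module k V] [FiniteDimensional k V]
    [AddTorsor V Q] {s : Set Q} {S : Set (Q → k)} (hne : S.Nonempty)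
    (haff : ∀ f ∈ S, ∃ A : Q →ᵃ[k] k, ⇑A = f) (hnonneg : ∀ f ∈ S, ∀ x ∈ s, 0 ≤ f x)
    (hzero : ∀ f ∈ S, ∃ x ∈ s, f x = 0) (hadd : ∀ f ∈ S, ∀ g ∈ S, f + g ∈ S) :
    ∃ x ∈ s, ∀ f ∈ S, f x = 0 := by
  let Z : (Q → k) → Set Q := fun f => {x ∈ s | f x = 0}
  obtain ⟨f₀, hmin⟩ := exists_minimalFor_of_wellFoundedLT (· ∈ S)
    (fun f => finrank k (affineSpan k (Z f)).direction) hne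
  obtain ⟨x₀, hx₀s, hx₀⟩ := hzero f₀ hmin.prop
  refine ⟨x₀, hx₀s, fun g hg => ?_⟩
  have hf₀g := hadd f₀ hmin.prop g hg
  have hZ : Z (f₀ + g) = Z f₀ ∩ Z g :=
    sep_add_eq_zero_eq_inter (hnonneg f₀ hmin.prop) (hnonneg g hg)
  have hspan : affineSpan k (Z (f₀ + g)) = affineSpan k (Z f₀) :=
    affineSpan_eq_of_subset_of_finrank_le (hzero _ hf₀g) (hZ ▸ Set.inter_subset_left)
      (hmin.le hf₀g)
  have hx₀span : x₀ ∈ affineSpan k (Z (f₀ + g)) :=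
    hspan ▸ subset_affineSpan k _ ⟨hx₀s, hx₀⟩
  obtain ⟨A, rfl⟩ := haff g hg
  have hA : (Z (f₀ + A)).EqOn A (AffineMap.const k Q (0 : k)) := fun x hx =>
    (hZ ▸ hx).2.2
  exact AffineMap.eqOn_affineSpan hA hx₀span

lemma IntegralAffine.exists_affineMap {m : ℕ} {f : (Fin m → ℝ) → ℝ} (hf : IntegralAffine m f) :
    ∃ A : (Fin m → ℝ) →ᵃ[ℝ] ℝ, ⇑A = f := by
  obtain ⟨n, y, rfl⟩ := hf
  refine ⟨(∑ i, (n i : ℝ) • LinearMap.proj i : (Fin m → ℝ) →ₗ[ℝ] ℝ).toAffineMap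
    + AffineMap.const ℝ _ y, ?_⟩
  ext x
  simp [smul_eq_mul]

lemma exists_eq_zero_of_mem_affNonneg_of_notMem_affPos {m : ℕ} {P : Set (Fin m → ℝ)}
    {f : (Fin m → ℝ) → ℝ} (hf : f ∈ affNonneg m P) (hf' : f ∉ affPos m P) :
    ∃ x ∈ P, f x = 0 := by
  obtain ⟨x, hxP, hx⟩ : ∃ x ∈ P, f x ≤ 0 := by
    simpa [affPos, hf.1] using hf'
  exact ⟨x, hxP, le_antisymm hx (hf.2 x hxP)⟩

theorem common_zero_of_submonoid_general (m : ℕ) (P : Set (Fin m → ℝ))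
    (S : Set ((Fin m → ℝ) → ℝ)) (hS : S ⊆ affNonneg m P)
    (h0 : (0 : (Fin m → ℝ) → ℝ) ∈ S)
    (hadd : ∀ f ∈ S, ∀ g ∈ S, f + g ∈ S)
    (hdisj : ∀ f ∈ S, f ∉ affPos m P) :
    ∃ x ∈ P, ∀ f ∈ S, f x = 0 :=
  exists_common_zero_of_add_mem ⟨0, h0⟩ (fun _ hf => (hS hf).1.exists_affineMap)
    (fun _ hf => (hS hf).2)
    (fun f hf => exists_eq_zero_of_mem_affNonneg_of_notMem_affPos (hS hf) (hdisj f hf)) hadd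

/-- A subset of `A(P)` containing `0`, closed under addition, and disjoint
from `A⁺(P)` has a common zero on `P`. -/
theorem common_zero_of_submonoid (m : ℕ) (P : Set (Fin m → ℝ))
    (hP : IsIntegralAffinePolytope m P)
    (S : Set ((Fin m → ℝ) → ℝ)) (hS : S ⊆ affNonneg m P)
    (h0 : (0 : (Fin m → ℝ) → ℝ) ∈ S)
    (hadd : ∀ f ∈ S, ∀ g ∈ S, f + g ∈ S)
    (hdisj : ∀ f ∈ S, f ∉ affPos m P) :
    ∃ x ∈ P, ∀ f ∈ S, f x = 0 :=
  common_zero_of_submonoid_general m P S hS h0 hadd hdisj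
end

section
/- Let P ⊆ ℝᵐ be an integral affine polytope which has nonempty interior and contains no affine line. For c ∈ (ℂˣ)ᵐ and a ∈ P, define Φ(c,a) : A(P) → ℂˣ × ℝ by Φ(c,a)(f) = (∏ i, (c i)^(n i), f(a)), where n : Fin m → ℤ is the (unique, since P has nonempty interior) tuple of coefficients of the linear part of the integral affine function f. Then Φ(c,a) is a monoid homomorphism from (A(P),+) to (ℂˣ,×) × (ℝ,+), and the map (c,a) ↦ Φ(c,a) is a bijection from (ℂˣ)ᵐ × P onto the set of monoid homomorphisms h : (A(P),+) → (ℂˣ,×) × (ℝ,+) satisfying: (i) h sends each constant function y ∈ A(P) to (1, y); (ii) the second component of h(f) is ≥ 0 for every f ∈ A(P); and (iii) the second component of h(f) is > 0 for every f ∈ A⁺(P). (This is the statement that points of the exploded coordinate chart 𝕋ᵐ_P correspond uniquely to pairs of a point of (ℂ*)ᵐ and a point of P.) -/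
/-- The conditions on a map `h : A(P) → ℂˣ × ℝ`: it is a monoid homomorphism
from `(A(P), +)` to `(ℂˣ, ×) × (ℝ, +)` sending each constant function
`y ∈ A(P)` to `(1, y)`, with second component nonnegative on `A(P)` and
strictly positive on `A⁺(P)`. -/
def IsGoodHom (m : ℕ) (P : Set (Fin m → ℝ))
    (h : ↥(affNonneg m P) → ℂˣ × ℝ) : Prop :=
  (∀ (f g : ↥(affNonneg m P))
      (hfg : (f : (Fin m → ℝ) → ℝ) + (g : (Fin m → ℝ) → ℝ) ∈ affNonneg m P),
      h ⟨(f : (Fin m → ℝ) → ℝ) + (g : (Fin m → ℝ) → ℝ), hfg⟩ =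
        ((h f).1 * (h g).1, (h f).2 + (h g).2)) ∧
  (∀ (y : ℝ) (hy : (fun _ : Fin m → ℝ => y) ∈ affNonneg m P),
      h ⟨fun _ => y, hy⟩ = (1, y)) ∧
  (∀ f : ↥(affNonneg m P), 0 ≤ (h f).2) ∧
  (∀ f : ↥(affNonneg m P), (f : (Fin m → ℝ) → ℝ) ∈ affPos m P → 0 < (h f).2)


namespace ExplodedAux

/-- The linear form with integer coefficients `p` evaluated at `x`. -/
def lsum (m : ℕ) (p : Fin m → ℤ) (x : Fin m → ℝ) : ℝ := ∑ i, (p i : ℝ) * x i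

/-- The integral affine function with linear coefficients `p` and constant `y`. -/
def aff (m : ℕ) (p : Fin m → ℤ) (y : ℝ) : (Fin m → ℝ) → ℝ :=
  fun x => (∑ i, (p i : ℝ) * x i) + y

lemma aff_apply (m : ℕ) (p : Fin m → ℤ) (y : ℝ) (x : Fin m → ℝ) :
    aff m p y x = lsum m p x + y := rfl

lemma lsum_add (m : ℕ) (p q : Fin m → ℤ) (x : Fin m → ℝ) :
    lsum m (p + q) x = lsum m p x + lsum m q x := by
  simp only [lsum, Pi.add_apply]
  rw [← Finset.sum_add_distrib]
  congr 1; funext i; push_cast; ring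

lemma lsum_point_add (m : ℕ) (p : Fin m → ℤ) (x y : Fin m → ℝ) :
    lsum m p (x + y) = lsum m p x + lsum m p y := by
  simp only [lsum, Pi.add_apply]
  rw [← Finset.sum_add_distrib]
  congr 1; funext i; ring

lemma lsum_smul (m : ℕ) (p : Fin m → ℤ) (t : ℝ) (x : Fin m → ℝ) :
    lsum m p (t • x) = t * lsum m p x := by
  simp only [lsum, Pi.smul_apply, smul_eq_mul, Finset.mul_sum]
  congr 1; funext i; ring

/-- standard basis vector δᵢ -/
def delta (m : ℕ) (i : Fin m) : Fin m → ℝ := fun j => if j = i then 1 else 0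

lemma lsum_delta (m : ℕ) (p : Fin m → ℤ) (i : Fin m) :
    lsum m p (delta m i) = p i := by
  simp only [lsum, delta, mul_ite, mul_one, mul_zero]
  rw [Finset.sum_ite_eq' Finset.univ i (fun j => ((p j : ℝ)))]
  simp

lemma aff_add (m : ℕ) (p q : Fin m → ℤ) (y z : ℝ) :
    aff m p y + aff m q z = aff m (p + q) (y + z) := by
  funext x
  simp only [Pi.add_apply, aff_apply, lsum_add]
  ring

/-- Uniqueness of the representation. -/
lemma aff_injective (m : ℕ) (p q : Fin m → ℤ) (y z : ℝ)
    (h : aff m p y = aff m q z) : p = q ∧ y = z := by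
  have h0 := congrFun h 0
  have hy : y = z := by
    simpa [aff_apply, lsum] using h0
  refine ⟨funext fun i => ?_, hy⟩
  have hi := congrFun h (delta m i)
  rw [aff_apply, aff_apply, lsum_delta, lsum_delta, hy] at hi
  exact_mod_cast add_right_cancel hi

lemma integralAffine_aff (m : ℕ) (p : Fin m → ℤ) (y : ℝ) :
    IntegralAffine m (aff m p y) := ⟨p, y, rfl⟩

lemma integralAffine_iff (m : ℕ) (f : (Fin m → ℝ) → ℝ) :
    IntegralAffine m f ↔ ∃ p y, f = aff m p y := Iff.rfl

/-- The linear coefficients of an integral affine function. -/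
noncomputable def coeffOf (m : ℕ) (f : (Fin m → ℝ) → ℝ) (hf : IntegralAffine m f) :
    Fin m → ℤ := hf.choose

noncomputable def constOf (m : ℕ) (f : (Fin m → ℝ) → ℝ) (hf : IntegralAffine m f) :
    ℝ := hf.choose_spec.choose

lemma repr_eq (m : ℕ) (f : (Fin m → ℝ) → ℝ) (hf : IntegralAffine m f) :
    f = aff m (coeffOf m f hf) (constOf m f hf) := hf.choose_spec.choose_spec

lemma coeffOf_eq (m : ℕ) (f : (Fin m → ℝ) → ℝ) (hf : IntegralAffine m f)
    (p : Fin m → ℤ) (y : ℝ) (h : f = aff m p y) :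
    coeffOf m f hf = p ∧ constOf m f hf = y := by
  have := (repr_eq m f hf).symm.trans h
  exact aff_injective m _ p _ y this

lemma const_eq_aff (m : ℕ) (y : ℝ) : (fun _ : Fin m → ℝ => y) = aff m 0 y := by
  funext x; simp [aff]

lemma zero_mem_affNonneg (m : ℕ) (P : Set (Fin m → ℝ)) :
    (fun _ : Fin m → ℝ => (0:ℝ)) ∈ affNonneg m P :=
  ⟨⟨0, 0, by funext x; simp [aff]⟩, fun x _ => le_refl 0⟩

lemma affNonneg_add (m : ℕ) (P : Set (Fin m → ℝ)) {f g : (Fin m → ℝ) → ℝ}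
    (hf : f ∈ affNonneg m P) (hg : g ∈ affNonneg m P) : f + g ∈ affNonneg m P := by
  obtain ⟨⟨p, y, hfp⟩, hf0⟩ := hf
  obtain ⟨⟨q, z, hgq⟩, hg0⟩ := hg
  refine ⟨⟨p + q, y + z, ?_⟩, fun x hx => add_nonneg (hf0 x hx) (hg0 x hx)⟩
  rw [hfp, hgq]
  exact aff_add m p q y z

end ExplodedAux
namespace ExplodedAux

lemma abs_lsum_le (m : ℕ) (p : Fin m → ℤ) (x : Fin m → ℝ) :
    |lsum m p x| ≤ (∑ i, |(p i : ℝ)|) * ‖x‖ := by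
  calc |lsum m p x| ≤ ∑ i, |(p i : ℝ) * x i| := Finset.abs_sum_le_sum_abs _ _
    _ ≤ ∑ i, |(p i : ℝ)| * ‖x‖ := by
        refine Finset.sum_le_sum fun i _ => ?_
        rw [abs_mul]
        exact mul_le_mul_of_nonneg_left
          (by simpa [Real.norm_eq_abs] using norm_le_pi_norm x i) (abs_nonneg _)
    _ = (∑ i, |(p i : ℝ)|) * ‖x‖ := by rw [Finset.sum_mul]

lemma continuous_lsum (m : ℕ) (p : Fin m → ℤ) : Continuous (lsum m p) := by
  unfold lsum
  exact continuous_finset_sum _ fun i _ => continuous_const.mul (continuous_apply i)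

lemma lsum_finsum (m : ℕ) {k : ℕ} (t : Finset (Fin k)) (nn : Fin k → (Fin m → ℤ))
    (x : Fin m → ℝ) :
    lsum m (∑ j ∈ t, nn j) x = ∑ j ∈ t, lsum m (nn j) x := by
  simp only [lsum, Finset.sum_apply, Int.cast_sum, Finset.sum_mul]
  exact Finset.sum_comm

lemma lsum_natmul (m : ℕ) (N : ℕ) (s : Fin m → ℤ) (x : Fin m → ℝ) :
    lsum m (fun i => (N : ℤ) * s i) x = (N : ℝ) * lsum m s x := by
  simp only [lsum, Finset.mul_sum]
  congr 1; funext i; push_cast; ring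

/-- The key polyhedral-geometry lemma: for any integer vector `n` there is `q`
such that both `q` and `n + q` are bounded below (as linear forms) on `P`. -/
lemma key_lemma (m : ℕ) (P : Set (Fin m → ℝ)) (hP : IsIntegralAffinePolytope m P)
    (hline : ∀ x v : Fin m → ℝ, v ≠ 0 → ∃ t : ℝ, x + t • v ∉ P) (n : Fin m → ℤ) :
    ∃ q : Fin m → ℤ, (∃ B, ∀ x ∈ P, B ≤ lsum m q x) ∧
      (∃ B, ∀ x ∈ P, B ≤ lsum m (n + q) x) := by
  rcases Nat.eq_zero_or_pos m with hm | hm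
  · subst hm
    refine ⟨0, ⟨0, fun x _ => ?_⟩, ⟨0, fun x _ => ?_⟩⟩ <;>
      simp [lsum, Finset.univ_eq_empty]
  obtain ⟨⟨x₀, hx₀⟩, k, f, strict, hIA, hPeq⟩ := hP
  choose nn yy hff using hIA
  -- membership gives nonnegativity of each defining function
  have hmem : ∀ x ∈ P, ∀ j, 0 ≤ lsum m (nn j) x + yy j := by
    intro x hx j
    rw [hPeq] at hx
    have := hx j
    have hfx : f j x = lsum m (nn j) x + yy j := by rw [hff j]; rfl
    rw [hfx] at this
    split at this
    · exact this.le
    · exact this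
  set s : Fin m → ℤ := ∑ j, nn j with hs
  have hlsum_s : ∀ x, lsum m s x = ∑ j, lsum m (nn j) x := fun x => lsum_finsum m _ nn x
  -- Step 1: positivity of s on the recession cone minus 0
  have step1 : ∀ v : Fin m → ℝ, v ≠ 0 → (∀ j, 0 ≤ lsum m (nn j) v) → 0 < lsum m s v := by
    intro v hv hnn
    rcases lt_or_eq_of_le (Finset.sum_nonneg fun j _ => hnn j) with h | h
    · rw [hlsum_s]; exact h
    · exfalso
      have hzero : ∀ j, lsum m (nn j) v = 0 := by
        intro j
        have := (Finset.sum_eq_zero_iff_of_nonneg (fun j _ => hnn j)).mp h.symm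
        exact this j (Finset.mem_univ j)
      obtain ⟨t, ht⟩ := hline x₀ v hv
      apply ht
      rw [hPeq]
      intro j
      have hfx : f j (x₀ + t • v) = lsum m (nn j) x₀ + yy j := by
        rw [hff j]
        show lsum m (nn j) (x₀ + t • v) + yy j = _
        rw [lsum_point_add, lsum_smul, hzero j]
        ring_nf
      have hx₀j : f j x₀ = lsum m (nn j) x₀ + yy j := by rw [hff j]; rfl
      rw [hPeq] at hx₀
      have := hx₀ j
      rw [hx₀j] at this
      rw [hfx]
      exact this
  -- compactness: minimum of ψ on the unit sphere
  have hne : Nonempty (Fin m) := Fin.pos_iff_nonempty.mp hm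
  set ψ : (Fin m → ℝ) → ℝ :=
    fun v => max (lsum m s v) (∑ j, max 0 (-(lsum m (nn j) v))) with hψdef
  have hψcont : Continuous ψ := by
    apply Continuous.max (continuous_lsum m s)
    exact continuous_finset_sum _ fun j _ =>
      continuous_const.max (continuous_lsum m (nn j)).neg
  have hψpos : ∀ v ∈ Metric.sphere (0 : Fin m → ℝ) 1, 0 < ψ v := by
    intro v hv
    have hvnorm : ‖v‖ = 1 := by simpa using hv
    have hvne : v ≠ 0 := by
      intro h; rw [h] at hvnorm; simp at hvnorm
    by_contra hcon
    push_neg at hcon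
    have h1 : lsum m s v ≤ 0 := le_trans (le_max_left _ _) hcon
    have h2 : (∑ j, max 0 (-(lsum m (nn j) v))) ≤ 0 := le_trans (le_max_right _ _) hcon
    have h3 : ∀ j, 0 ≤ lsum m (nn j) v := by
      intro j
      have hterm : max 0 (-(lsum m (nn j) v)) = 0 := by
        have := (Finset.sum_eq_zero_iff_of_nonneg
          (fun j _ => le_max_left 0 (-(lsum m (nn j) v)))).mp
          (le_antisymm h2 (Finset.sum_nonneg fun j _ => le_max_left _ _))
        exact this j (Finset.mem_univ j)
      have := le_max_right 0 (-(lsum m (nn j) v))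
      rw [hterm] at this
      linarith
    exact absurd h1 (not_le.mpr (step1 v hvne h3))
  have hsph_ne : (Metric.sphere (0 : Fin m → ℝ) 1).Nonempty := by
    refine ⟨fun _ => 1, ?_⟩
    simp [pi_norm_const]
  obtain ⟨v₀, hv₀S, hmin⟩ :=
    (isCompact_sphere (0 : Fin m → ℝ) 1).exists_isMinOn hsph_ne hψcont.continuousOn
  set ε : ℝ := ψ v₀ with hε
  have hεpos : 0 < ε := hψpos v₀ hv₀S
  have hεle : ∀ v ∈ Metric.sphere (0 : Fin m → ℝ) 1, ε ≤ ψ v := fun v hv => hmin hv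
  set δ : ℝ := ε / (2 * (k + 1)) with hδ
  have hδpos : 0 < δ := by positivity
  have hδε : δ ≤ ε := by
    rw [hδ, div_le_iff₀ (by positivity)]
    nlinarith
  -- quantitative positivity on the sphere
  have Hsphere : ∀ v : Fin m → ℝ, ‖v‖ = 1 → (∀ j, -δ ≤ lsum m (nn j) v) →
      δ ≤ lsum m s v := by
    intro v hv hj
    have hvS : v ∈ Metric.sphere (0 : Fin m → ℝ) 1 := by simpa using hv
    have hb : (∑ j, max 0 (-(lsum m (nn j) v))) ≤ k * δ := by
      calc (∑ j, max 0 (-(lsum m (nn j) v))) ≤ ∑ _j : Fin k, δ := by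
            refine Finset.sum_le_sum fun j _ => ?_
            exact max_le hδpos.le (by linarith [hj j])
        _ = k * δ := by simp [Finset.sum_const, Finset.card_univ, nsmul_eq_mul]
    have hδeq : δ * (2 * (k + 1)) = ε := by
      rw [hδ]; field_simp
    have hkδ : (k : ℝ) * δ < ε := by nlinarith [hδpos, Nat.cast_nonneg (α := ℝ) k]
    have := hεle v hvS
    rw [hψdef] at this
    rcases le_or_gt ε (lsum m s v) with h | h
    · linarith
    · exfalso
      have : ε ≤ max (lsum m s v) (∑ j, max 0 (-(lsum m (nn j) v))) := this
      rcases max_cases (lsum m s v) (∑ j, max 0 (-(lsum m (nn j) v))) with ⟨heq, _⟩ | ⟨heq, _⟩ <;>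
        rw [heq] at this <;> linarith
  -- bound on constants
  set Y : ℝ := ∑ j, |yy j| with hY
  have hYnn : 0 ≤ Y := Finset.sum_nonneg fun j _ => abs_nonneg _
  have hLlow : ∀ x ∈ P, ∀ j, -Y ≤ lsum m (nn j) x := by
    intro x hx j
    have h1 := hmem x hx j
    have h2 : yy j ≤ Y :=
      le_trans (le_abs_self _) (Finset.single_le_sum (fun j _ => abs_nonneg (yy j))
        (Finset.mem_univ j))
    linarith
  set R : ℝ := max (Y / δ) 1 with hR
  have hRpos : 0 < R := lt_of_lt_of_le one_pos (le_max_right _ _)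
  have Hfar : ∀ x ∈ P, R ≤ ‖x‖ → δ * ‖x‖ ≤ lsum m s x := by
    intro x hx hxR
    have hxpos : 0 < ‖x‖ := lt_of_lt_of_le hRpos hxR
    set v : Fin m → ℝ := ‖x‖⁻¹ • x with hv
    have hvnorm : ‖v‖ = 1 := by
      rw [hv, norm_smul, norm_inv, norm_norm, inv_mul_cancel₀ hxpos.ne']
    have hYx : Y ≤ δ * ‖x‖ := by
      have h1 : Y / δ ≤ R := le_max_left _ _
      rw [div_le_iff₀ hδpos] at h1
      calc Y ≤ R * δ := h1
        _ ≤ ‖x‖ * δ := mul_le_mul_of_nonneg_right hxR hδpos.le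
        _ = δ * ‖x‖ := mul_comm _ _
    have hjv : ∀ j, -δ ≤ lsum m (nn j) v := by
      intro j
      rw [hv, lsum_smul]
      have := hLlow x hx j
      rw [neg_le]
      calc -(‖x‖⁻¹ * lsum m (nn j) x) = ‖x‖⁻¹ * (-(lsum m (nn j) x)) := by ring
        _ ≤ ‖x‖⁻¹ * Y := mul_le_mul_of_nonneg_left (by linarith) (inv_nonneg.mpr hxpos.le)
        _ ≤ ‖x‖⁻¹ * (δ * ‖x‖) := mul_le_mul_of_nonneg_left hYx (inv_nonneg.mpr hxpos.le)
        _ = δ := by field_simp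
    have := Hsphere v hvnorm hjv
    rw [hv, lsum_smul] at this
    calc δ * ‖x‖ ≤ (‖x‖⁻¹ * lsum m s x) * ‖x‖ := mul_le_mul_of_nonneg_right this hxpos.le
      _ = lsum m s x := by field_simp
  -- choose N
  set C : ℝ := ∑ i, |(n i : ℝ)| with hC
  have hCnn : 0 ≤ C := Finset.sum_nonneg fun i _ => abs_nonneg _
  obtain ⟨N, hN⟩ := exists_nat_ge ((C + 1) / δ)
  have hNδ : C ≤ (N : ℝ) * δ := by
    rw [div_le_iff₀ hδpos] at hN
    linarith
  refine ⟨fun i => (N : ℤ) * s i, ?_, ?_⟩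
  · -- q bounded below
    set Cq : ℝ := ∑ i, |(((N : ℤ) * s i : ℤ) : ℝ)| with hCq
    have hCqnn : 0 ≤ Cq := Finset.sum_nonneg fun i _ => abs_nonneg _
    refine ⟨-(Cq * R), fun x hx => ?_⟩
    rcases le_or_gt R ‖x‖ with h | h
    · have h1 := Hfar x hx h
      rw [lsum_natmul]
      have h2 : 0 ≤ (N : ℝ) * lsum m s x := by
        have : 0 ≤ δ * ‖x‖ := by positivity
        exact mul_nonneg (Nat.cast_nonneg N) (le_trans this h1)
      nlinarith
    · have h1 := abs_lsum_le m (fun i => (N : ℤ) * s i) x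
      have h2 : Cq * ‖x‖ ≤ Cq * R := mul_le_mul_of_nonneg_left h.le hCqnn
      have h3 := neg_abs_le (lsum m (fun i => (N : ℤ) * s i) x)
      rw [← hCq] at h1
      linarith
  · -- n + q bounded below
    set Cnq : ℝ := ∑ i, |((n i + (N : ℤ) * s i : ℤ) : ℝ)| with hCnq
    have hCnqnn : 0 ≤ Cnq := Finset.sum_nonneg fun i _ => abs_nonneg _
    refine ⟨-(Cnq * R), fun x hx => ?_⟩
    have hsplit : lsum m (n + fun i => (N : ℤ) * s i) x
        = lsum m n x + (N : ℝ) * lsum m s x := by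
      rw [lsum_add, lsum_natmul]
    rcases le_or_gt R ‖x‖ with h | h
    · have h1 := Hfar x hx h
      have h2 : |lsum m n x| ≤ C * ‖x‖ := abs_lsum_le m n x
      have h3 : -(C * ‖x‖) ≤ lsum m n x := by
        have := neg_abs_le (lsum m n x); linarith
      have h4 : (N : ℝ) * (δ * ‖x‖) ≤ (N : ℝ) * lsum m s x :=
        mul_le_mul_of_nonneg_left h1 (Nat.cast_nonneg N)
      have h5 : C * ‖x‖ ≤ (N : ℝ) * δ * ‖x‖ :=
        mul_le_mul_of_nonneg_right hNδ (norm_nonneg x)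
      rw [hsplit]
      nlinarith [mul_nonneg hCnqnn hRpos.le]
    · have h1 := abs_lsum_le m (n + fun i => (N : ℤ) * s i) x
      have h2 : Cnq * ‖x‖ ≤ Cnq * R := mul_le_mul_of_nonneg_left h.le hCnqnn
      have h3 := neg_abs_le (lsum m (n + fun i => (N : ℤ) * s i) x)
      have h4 : (∑ i, |(((n + fun i => (N : ℤ) * s i) i : ℤ) : ℝ)|) = Cnq := by
        rw [hCnq]; rfl
      rw [h4] at h1
      linarith

end ExplodedAux
namespace ExplodedAux

lemma integralAffine_add {m : ℕ} {f g : (Fin m → ℝ) → ℝ}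
    (hf : IntegralAffine m f) (hg : IntegralAffine m g) : IntegralAffine m (f + g) := by
  obtain ⟨p, y, rfl⟩ := hf
  obtain ⟨q, z, rfl⟩ := hg
  exact ⟨p + q, y + z, aff_add m p q y z⟩

lemma integralAffine_neg {m : ℕ} {f : (Fin m → ℝ) → ℝ}
    (hf : IntegralAffine m f) : IntegralAffine m (-f) := by
  obtain ⟨p, y, rfl⟩ := hf
  refine ⟨-p, -y, ?_⟩
  funext x
  show -(aff m p y x) = aff m (-p) (-y) x
  simp only [aff_apply, lsum, Pi.neg_apply]
  have h : ∀ j : Fin m, ((-p j : ℤ) : ℝ) * x j = -((p j : ℝ) * x j) := by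
    intro j; push_cast; ring
  rw [Finset.sum_congr rfl (fun j _ => h j), Finset.sum_neg_distrib]
  ring

/-- Every integral affine function has a "companion" `g` in `A(P)` with `f + g ∈ A(P)`. -/
lemma gen_companion (m : ℕ) (P : Set (Fin m → ℝ)) (hP : IsIntegralAffinePolytope m P)
    (hline : ∀ x v : Fin m → ℝ, v ≠ 0 → ∃ t : ℝ, x + t • v ∉ P)
    (f : (Fin m → ℝ) → ℝ) (hf : IntegralAffine m f) :
    ∃ g, g ∈ affNonneg m P ∧ f + g ∈ affNonneg m P := by
  obtain ⟨p, y, rfl⟩ := hf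
  obtain ⟨q, ⟨B₁, hB₁⟩, ⟨B₂, hB₂⟩⟩ := key_lemma m P hP hline p
  set Y : ℝ := max (-B₁) (-B₂ - y) with hYdef
  refine ⟨aff m q Y, ⟨⟨q, Y, rfl⟩, fun x hx => ?_⟩, ?_⟩
  · have := hB₁ x hx
    have h2 : -B₁ ≤ Y := le_max_left _ _
    rw [aff_apply]
    linarith
  · have heq : (fun x => (∑ i, (p i : ℝ) * x i) + y) + aff m q Y = aff m (p + q) (y + Y) :=
      aff_add m p q y Y
    rw [heq]
    refine ⟨⟨p + q, y + Y, rfl⟩, fun x hx => ?_⟩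
    have := hB₂ x hx
    have h2 : -B₂ - y ≤ Y := le_max_right _ _
    rw [aff_apply]
    linarith

section Extension

variable {A : Type} [AddCommGroup A]

/-- Additivity hypothesis for a map on `A(P)`. -/
def Hadd (m : ℕ) (P : Set (Fin m → ℝ)) (φ : ↥(affNonneg m P) → A) : Prop :=
  ∀ (f g : ↥(affNonneg m P))
    (hfg : (f : (Fin m → ℝ) → ℝ) + (g : (Fin m → ℝ) → ℝ) ∈ affNonneg m P),
    φ ⟨(f : (Fin m → ℝ) → ℝ) + (g : (Fin m → ℝ) → ℝ), hfg⟩ = φ f + φ g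

/-- Extension of `φ` to all integral affine functions. -/
noncomputable def ext (m : ℕ) (P : Set (Fin m → ℝ)) (hP : IsIntegralAffinePolytope m P)
    (hline : ∀ x v : Fin m → ℝ, v ≠ 0 → ∃ t : ℝ, x + t • v ∉ P)
    (φ : ↥(affNonneg m P) → A) (f : (Fin m → ℝ) → ℝ) (hf : IntegralAffine m f) : A :=
  φ ⟨f + (gen_companion m P hP hline f hf).choose,
      (gen_companion m P hP hline f hf).choose_spec.2⟩ -
  φ ⟨(gen_companion m P hP hline f hf).choose,
      (gen_companion m P hP hline f hf).choose_spec.1⟩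

variable {m : ℕ} {P : Set (Fin m → ℝ)} {hP : IsIntegralAffinePolytope m P}
  {hline : ∀ x v : Fin m → ℝ, v ≠ 0 → ∃ t : ℝ, x + t • v ∉ P}
  {φ : ↥(affNonneg m P) → A}

lemma ext_spec (hadd : Hadd m P φ) (f : (Fin m → ℝ) → ℝ) (hf : IntegralAffine m f)
    (g : (Fin m → ℝ) → ℝ) (hg : g ∈ affNonneg m P) (hfg : f + g ∈ affNonneg m P) :
    ext m P hP hline φ f hf = φ ⟨f + g, hfg⟩ - φ ⟨g, hg⟩ := by
  set g₀ := (gen_companion m P hP hline f hf).choose with hg₀def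
  have hg₀ := (gen_companion m P hP hline f hf).choose_spec.1
  have hfg₀ := (gen_companion m P hP hline f hf).choose_spec.2
  have h1 := hadd ⟨f + g₀, hfg₀⟩ ⟨g, hg⟩ (affNonneg_add m P hfg₀ hg)
  have h2 := hadd ⟨f + g, hfg⟩ ⟨g₀, hg₀⟩ (affNonneg_add m P hfg hg₀)
  have heq : (⟨(f + g₀) + g, affNonneg_add m P hfg₀ hg⟩ : ↥(affNonneg m P)) =
      ⟨(f + g) + g₀, affNonneg_add m P hfg hg₀⟩ := by
    apply Subtype.ext
    show (f + g₀) + g = (f + g) + g₀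
    rw [add_right_comm]
  rw [heq] at h1
  rw [h2] at h1
  show φ ⟨f + g₀, hfg₀⟩ - φ ⟨g₀, hg₀⟩ = _
  rw [sub_eq_sub_iff_add_eq_add]
  linear_combination (norm := abel) h1.symm

lemma ext_extends (hadd : Hadd m P φ)
    (hzero : φ ⟨fun _ => 0, zero_mem_affNonneg m P⟩ = 0)
    (f : (Fin m → ℝ) → ℝ) (hfmem : f ∈ affNonneg m P) :
    ext m P hP hline φ f hfmem.1 = φ ⟨f, hfmem⟩ := by
  have hf0 : f + (fun _ => (0:ℝ)) ∈ affNonneg m P := by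
    have : f + (fun _ : Fin m → ℝ => (0:ℝ)) = f := by funext x; show f x + 0 = f x; ring
    rw [this]; exact hfmem
  rw [ext_spec hadd f hfmem.1 (fun _ => 0) (zero_mem_affNonneg m P) hf0]
  have heq : (⟨f + (fun _ => (0:ℝ)), hf0⟩ : ↥(affNonneg m P)) = ⟨f, hfmem⟩ := by
    apply Subtype.ext
    funext x; show f x + 0 = f x; ring
  rw [heq, hzero, sub_zero]

lemma ext_add (hadd : Hadd m P φ)
    (f f' : (Fin m → ℝ) → ℝ) (hf : IntegralAffine m f) (hf' : IntegralAffine m f')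
    (hff' : IntegralAffine m (f + f')) :
    ext m P hP hline φ (f + f') hff' =
      ext m P hP hline φ f hf + ext m P hP hline φ f' hf' := by
  obtain ⟨g, hg, hfg⟩ := gen_companion m P hP hline f hf
  obtain ⟨g', hg', hfg'⟩ := gen_companion m P hP hline f' hf'
  have hgg' : g + g' ∈ affNonneg m P := affNonneg_add m P hg hg'
  have hkey : (f + f') + (g + g') = (f + g) + (f' + g') := by
    funext x
    show (f x + f' x) + (g x + g' x) = (f x + g x) + (f' x + g' x)
    ring
  have hmem : (f + f') + (g + g') ∈ affNonneg m P := by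
    rw [hkey]; exact affNonneg_add m P hfg hfg'
  rw [ext_spec hadd (f + f') hff' (g + g') hgg' hmem,
      ext_spec hadd f hf g hg hfg, ext_spec hadd f' hf' g' hg' hfg']
  have h1 : (⟨(f + f') + (g + g'), hmem⟩ : ↥(affNonneg m P)) =
      ⟨(f + g) + (f' + g'), by rw [← hkey]; exact hmem⟩ := Subtype.ext hkey
  rw [h1]
  rw [hadd ⟨f + g, hfg⟩ ⟨f' + g', hfg'⟩ (by rw [← hkey]; exact hmem)]
  rw [hadd ⟨g, hg⟩ ⟨g', hg'⟩ hgg']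
  abel

end Extension

/-- The additive group of integral affine functions. -/
def affGroup (m : ℕ) : AddSubgroup ((Fin m → ℝ) → ℝ) where
  carrier := {f | IntegralAffine m f}
  add_mem' := integralAffine_add
  zero_mem' := ⟨0, 0, by funext x; simp [aff]⟩
  neg_mem' := integralAffine_neg

/-- integer delta vector -/
def idelta (m : ℕ) (i : Fin m) : Fin m → ℤ := fun j => if j = i then 1 else 0

lemma coord_apply (m : ℕ) (i : Fin m) (x : Fin m → ℝ) :
    aff m (idelta m i) 0 x = x i := by
  simp only [aff_apply, lsum, idelta]
  rw [add_zero]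
  have : ∀ j : Fin m, ((if j = i then (1:ℤ) else 0 : ℤ) : ℝ) * x j
      = if j = i then x j else 0 := by
    intro j; split <;> simp
  rw [Finset.sum_congr rfl (fun j _ => this j)]
  rw [Finset.sum_ite_eq' Finset.univ i (fun j => x j)]
  simp

/-- decomposition of an affine function in the group `affGroup`. -/
lemma aff_decompose (m : ℕ) (p : Fin m → ℤ) (y : ℝ) :
    (⟨aff m p y, ⟨p, y, rfl⟩⟩ : affGroup m) =
      (∑ i, p i • (⟨aff m (idelta m i) 0, ⟨_, _, rfl⟩⟩ : affGroup m)) +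
        ⟨aff m 0 y, ⟨0, y, rfl⟩⟩ := by
  apply Subtype.ext
  push_cast
  funext x
  simp only [Pi.add_apply, Finset.sum_apply]
  have h1 : ∀ i : Fin m, (p i • (aff m (idelta m i) 0)) x = (p i : ℝ) * x i := by
    intro i
    rw [Pi.smul_apply, coord_apply, zsmul_eq_mul]
  rw [Finset.sum_congr rfl (fun i _ => h1 i)]
  have h2 : aff m 0 y x = y := by simp [aff_apply, lsum]
  rw [h2]
  rfl

/-- The extension as an additive monoid hom on `affGroup`. -/
noncomputable def extHom {A : Type} [AddCommGroup A] (m : ℕ) (P : Set (Fin m → ℝ))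
    (hP : IsIntegralAffinePolytope m P)
    (hline : ∀ x v : Fin m → ℝ, v ≠ 0 → ∃ t : ℝ, x + t • v ∉ P)
    (φ : ↥(affNonneg m P) → A) (hadd : Hadd m P φ) : ↥(affGroup m) →+ A :=
  AddMonoidHom.mk' (fun f => ext m P hP hline φ f.1 f.2)
    (fun f f' => ext_add hadd f.1 f'.1 f.2 f'.2 (f + f').2)

lemma extHom_aff {A : Type} [AddCommGroup A] (m : ℕ) (P : Set (Fin m → ℝ))
    (hP : IsIntegralAffinePolytope m P)
    (hline : ∀ x v : Fin m → ℝ, v ≠ 0 → ∃ t : ℝ, x + t • v ∉ P)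
    (φ : ↥(affNonneg m P) → A) (hadd : Hadd m P φ) (p : Fin m → ℤ) (y : ℝ) :
    extHom m P hP hline φ hadd ⟨aff m p y, ⟨p, y, rfl⟩⟩ =
      (∑ i, p i • extHom m P hP hline φ hadd ⟨aff m (idelta m i) 0, ⟨_, _, rfl⟩⟩) +
        extHom m P hP hline φ hadd ⟨aff m 0 y, ⟨0, y, rfl⟩⟩ := by
  rw [aff_decompose m p y]
  rw [map_add, map_sum]
  congr 1
  refine Finset.sum_congr rfl fun i _ => ?_
  rw [map_zsmul]

end ExplodedAux
namespace ExplodedAux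

section GoodHom

variable (m : ℕ) (P : Set (Fin m → ℝ)) (hP : IsIntegralAffinePolytope m P)
  (hline : ∀ x v : Fin m → ℝ, v ≠ 0 → ∃ t : ℝ, x + t • v ∉ P)
  (h : ↥(affNonneg m P) → ℂˣ × ℝ)

lemma const_mem_affNonneg {z : ℝ} (hz : 0 ≤ z) :
    (fun _ : Fin m → ℝ => z) ∈ affNonneg m P :=
  ⟨⟨0, z, const_eq_aff m z⟩, fun x _ => hz⟩

/-- second component of `h` -/
noncomputable def phi2 : ↥(affNonneg m P) → ℝ := fun f => (h f).2

/-- first component of `h`, additively -/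
noncomputable def phi1 : ↥(affNonneg m P) → Additive ℂˣ := fun f => Additive.ofMul (h f).1

lemma hadd2 (hgood : IsGoodHom m P h) : Hadd m P (phi2 m P h) := by
  intro f g hfg
  show (h _).2 = (h f).2 + (h g).2
  rw [hgood.1 f g hfg]

lemma hadd1 (hgood : IsGoodHom m P h) : Hadd m P (phi1 m P h) := by
  intro f g hfg
  show Additive.ofMul (h _).1 = Additive.ofMul (h f).1 + Additive.ofMul (h g).1
  rw [hgood.1 f g hfg]
  rfl

lemma hzero2 (hgood : IsGoodHom m P h) : phi2 m P h ⟨fun _ => 0, zero_mem_affNonneg m P⟩ = 0 := by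
  show (h _).2 = 0
  rw [hgood.2.1 0 (zero_mem_affNonneg m P)]

lemma hzero1 (hgood : IsGoodHom m P h) : phi1 m P h ⟨fun _ => 0, zero_mem_affNonneg m P⟩ = 0 := by
  show Additive.ofMul (h _).1 = 0
  rw [hgood.2.1 0 (zero_mem_affNonneg m P)]
  rfl

lemma ext_const2 (hgood : IsGoodHom m P h) (y : ℝ) :
    ext m P hP hline (phi2 m P h) (aff m 0 y) ⟨0, y, rfl⟩ = y := by
  set z : ℝ := |y| + 1 with hzdef
  have hz : (0:ℝ) ≤ z := by positivity
  have hyz : (0:ℝ) ≤ y + z := by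
    have := neg_abs_le y; rw [hzdef]; linarith
  have hgz := const_mem_affNonneg m P (z := z) hz
  have hfun : aff m 0 y + (fun _ : Fin m → ℝ => z) = fun _ => y + z := by
    funext x; show aff m 0 y x + z = y + z
    simp [aff_apply, lsum]
  have hmem : aff m 0 y + (fun _ : Fin m → ℝ => z) ∈ affNonneg m P := by
    rw [hfun]; exact const_mem_affNonneg m P hyz
  rw [ext_spec (hadd2 m P h hgood) (aff m 0 y) ⟨0, y, rfl⟩ _ hgz hmem]
  have h1 : (⟨aff m 0 y + (fun _ : Fin m → ℝ => z), hmem⟩ : ↥(affNonneg m P)) =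
      ⟨fun _ => y + z, const_mem_affNonneg m P hyz⟩ := Subtype.ext hfun
  rw [h1]
  show (h _).2 - (h _).2 = y
  rw [hgood.2.1 (y + z) (const_mem_affNonneg m P hyz),
      hgood.2.1 z (const_mem_affNonneg m P hz)]
  ring

lemma ext_const1 (hgood : IsGoodHom m P h) (y : ℝ) :
    ext m P hP hline (phi1 m P h) (aff m 0 y) ⟨0, y, rfl⟩ = 0 := by
  set z : ℝ := |y| + 1 with hzdef
  have hz : (0:ℝ) ≤ z := by positivity
  have hyz : (0:ℝ) ≤ y + z := by
    have := neg_abs_le y; rw [hzdef]; linarith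
  have hgz := const_mem_affNonneg m P (z := z) hz
  have hfun : aff m 0 y + (fun _ : Fin m → ℝ => z) = fun _ => y + z := by
    funext x; show aff m 0 y x + z = y + z
    simp [aff_apply, lsum]
  have hmem : aff m 0 y + (fun _ : Fin m → ℝ => z) ∈ affNonneg m P := by
    rw [hfun]; exact const_mem_affNonneg m P hyz
  rw [ext_spec (hadd1 m P h hgood) (aff m 0 y) ⟨0, y, rfl⟩ _ hgz hmem]
  have h1 : (⟨aff m 0 y + (fun _ : Fin m → ℝ => z), hmem⟩ : ↥(affNonneg m P)) =
      ⟨fun _ => y + z, const_mem_affNonneg m P hyz⟩ := Subtype.ext hfun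
  rw [h1]
  show Additive.ofMul (h _).1 - Additive.ofMul (h _).1 = 0
  rw [hgood.2.1 (y + z) (const_mem_affNonneg m P hyz),
      hgood.2.1 z (const_mem_affNonneg m P hz)]
  simp

/-- The real point associated to a good hom. -/
noncomputable def ptOf : Fin m → ℝ :=
  fun i => ext m P hP hline (phi2 m P h) (aff m (idelta m i) 0) ⟨idelta m i, 0, rfl⟩

/-- The `(ℂˣ)ᵐ` point associated to a good hom. -/
noncomputable def cOf : Fin m → ℂˣ :=
  fun i => Additive.toMul
    (ext m P hP hline (phi1 m P h) (aff m (idelta m i) 0) ⟨idelta m i, 0, rfl⟩)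

lemma central2 (hgood : IsGoodHom m P h) (f : (Fin m → ℝ) → ℝ) (hf : f ∈ affNonneg m P) (p : Fin m → ℤ) (y : ℝ)
    (hrep : f = aff m p y) :
    (h ⟨f, hf⟩).2 = lsum m p (ptOf m P hP hline h) + y := by
  have e1 : (h ⟨f, hf⟩).2 = ext m P hP hline (phi2 m P h) f hf.1 :=
    (ext_extends (hadd2 m P h hgood) (hzero2 m P h hgood) f hf).symm
  rw [e1]
  subst hrep
  have e2 : ext m P hP hline (phi2 m P h) (aff m p y) hf.1 =
      extHom m P hP hline (phi2 m P h) (hadd2 m P h hgood) ⟨aff m p y, ⟨p, y, rfl⟩⟩ := rfl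
  rw [e2, extHom_aff]
  have e3 : ∀ i : Fin m,
      p i • extHom m P hP hline (phi2 m P h) (hadd2 m P h hgood)
          ⟨aff m (idelta m i) 0, ⟨_, _, rfl⟩⟩
        = (p i : ℝ) * ptOf m P hP hline h i := by
    intro i
    rw [zsmul_eq_mul]
    rfl
  rw [Finset.sum_congr rfl (fun i _ => e3 i)]
  have e4 : extHom m P hP hline (phi2 m P h) (hadd2 m P h hgood) ⟨aff m 0 y, ⟨0, y, rfl⟩⟩
      = y := ext_const2 m P hP hline h hgood y
  rw [e4]
  rfl

lemma central1 (hgood : IsGoodHom m P h) (f : (Fin m → ℝ) → ℝ) (hf : f ∈ affNonneg m P) (p : Fin m → ℤ) (y : ℝ)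
    (hrep : f = aff m p y) :
    (h ⟨f, hf⟩).1 = ∏ i, (cOf m P hP hline h i) ^ (p i) := by
  have e1 : Additive.ofMul (h ⟨f, hf⟩).1 = ext m P hP hline (phi1 m P h) f hf.1 :=
    (ext_extends (hadd1 m P h hgood) (hzero1 m P h hgood) f hf).symm
  have e5 : (h ⟨f, hf⟩).1 = Additive.toMul (ext m P hP hline (phi1 m P h) f hf.1) := by
    rw [← e1]; rfl
  rw [e5]
  subst hrep
  have e2 : ext m P hP hline (phi1 m P h) (aff m p y) hf.1 =
      extHom m P hP hline (phi1 m P h) (hadd1 m P h hgood) ⟨aff m p y, ⟨p, y, rfl⟩⟩ := rfl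
  rw [e2, extHom_aff]
  have e4 : extHom m P hP hline (phi1 m P h) (hadd1 m P h hgood) ⟨aff m 0 y, ⟨0, y, rfl⟩⟩
      = 0 := ext_const1 m P hP hline h hgood y
  rw [e4, add_zero]
  rw [toMul_sum]
  refine Finset.prod_congr rfl fun i _ => ?_
  rw [toMul_zsmul]
  rfl

end GoodHom

end ExplodedAux
namespace ExplodedAux

lemma lsum_point_sub (m : ℕ) (p : Fin m → ℤ) (x y : Fin m → ℝ) :
    lsum m p (x - y) = lsum m p x - lsum m p y := by
  simp only [lsum, Pi.sub_apply]
  rw [← Finset.sum_sub_distrib]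
  congr 1; funext i; ring

/-- The chart map `Φ`. -/
noncomputable def Phi (m : ℕ) (P : Set (Fin m → ℝ)) :
    (Fin m → ℂˣ) × ↥P → (↥(affNonneg m P) → ℂˣ × ℝ) :=
  fun ca f => (∏ i, ca.1 i ^ (coeffOf m f.1 f.2.1 i), f.1 ca.2.1)

lemma zpow_prod_split (m : ℕ) (i : Fin m) (q : Fin m → ℤ) (d : Fin m → ℂˣ) :
    ∏ j, d j ^ ((idelta m i + q) j) = d i * ∏ j, d j ^ q j := by
  have h : ∀ j, d j ^ ((idelta m i + q) j) = (if j = i then d j else 1) * d j ^ q j := by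
    intro j
    show d j ^ (idelta m i j + q j) = _
    rw [zpow_add]
    congr 1
    show d j ^ (if j = i then (1:ℤ) else 0) = _
    split <;> simp
  rw [Finset.prod_congr rfl (fun j _ => h j), Finset.prod_mul_distrib,
    Finset.prod_ite_eq' Finset.univ i (fun j => d j)]
  simp

end ExplodedAux


open ExplodedAux

/-- Points of the exploded coordinate chart `𝕋ᵐ_P` correspond uniquely to
pairs `(c, a) ∈ (ℂ*)ᵐ × P`: the map `Φ(c,a)(f) = (∏ i, (c i)^(n i), f a)`
(where `n` is the linear part of `f`) is a bijection from `(ℂˣ)ᵐ × P` onto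
the set of monoid homomorphisms `(A(P), +) → (ℂˣ, ×) × (ℝ, +)` sending
constants `y` to `(1, y)`, with second component nonnegative on `A(P)` and
positive on `A⁺(P)`. -/
theorem exploded_chart_points (m : ℕ) (P : Set (Fin m → ℝ))
    (hP : IsIntegralAffinePolytope m P)
    (hint : (interior P).Nonempty)
    (hline : ∀ x v : Fin m → ℝ, v ≠ 0 → ∃ t : ℝ, x + t • v ∉ P) :
    ∃ Φ : (Fin m → ℂˣ) × ↥P → (↥(affNonneg m P) → ℂˣ × ℝ),
      (∀ (c : Fin m → ℂˣ) (a : ↥P) (f : ↥(affNonneg m P))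
          (n : Fin m → ℤ) (y : ℝ),
          (f : (Fin m → ℝ) → ℝ) = (fun x => (∑ i, (n i : ℝ) * x i) + y) →
          Φ (c, a) f = (∏ i, (c i) ^ (n i), (f : (Fin m → ℝ) → ℝ) a)) ∧
      Function.Injective Φ ∧
      Set.range Φ = {h | IsGoodHom m P h} := by
  refine ⟨Phi m P, ?_, ?_, ?_⟩
  · -- the formula
    intro c a f n y hf
    have hc := coeffOf_eq m f.1 f.2.1 n y hf
    show (∏ i, c i ^ (coeffOf m f.1 f.2.1 i), f.1 a.1) = _
    rw [hc.1]
  · -- injectivity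
    intro x x' heq
    obtain ⟨c, a⟩ := x
    obtain ⟨c', a'⟩ := x'
    have hPc := hP
    obtain ⟨⟨x₀, hx₀⟩, k, f, strict, hIA, hPeq⟩ := hPc
    choose nn yy hff using hIA
    have hPiff : ∀ z : Fin m → ℝ, z ∈ P ↔
        ∀ j, (if strict j = true then 0 < f j z else 0 ≤ f j z) := by
      intro z; rw [hPeq]; exact Iff.rfl
    have hmemf : ∀ j, f j ∈ affNonneg m P := by
      intro j
      refine ⟨⟨nn j, yy j, hff j⟩, fun x hx => ?_⟩
      have := (hPiff x).mp hx j
      split at this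
      · exact this.le
      · exact this
    have hsnd : ∀ j, f j a.1 = f j a'.1 := by
      intro j
      exact congrArg Prod.snd (congrFun heq ⟨f j, hmemf j⟩)
    have haa : a.1 = a'.1 := by
      by_contra hne
      have hv : a.1 - a'.1 ≠ 0 := sub_ne_zero.mpr hne
      have hz : ∀ j, lsum m (nn j) (a.1 - a'.1) = 0 := by
        intro j
        have h1 : f j a.1 = lsum m (nn j) a.1 + yy j := by rw [hff j]; rfl
        have h2 : f j a'.1 = lsum m (nn j) a'.1 + yy j := by rw [hff j]; rfl
        have h3 := lsum_point_sub m (nn j) a.1 a'.1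
        have h4 := hsnd j
        rw [h1, h2] at h4
        linarith
      obtain ⟨t, ht⟩ := hline a.1 (a.1 - a'.1) hv
      apply ht
      have h5 : (a.1 + t • (a.1 - a'.1)) ∈
          {x | ∀ j, if strict j then 0 < f j x else 0 ≤ f j x} := by
        intro j
        have hcomp : f j (a.1 + t • (a.1 - a'.1)) = f j a.1 := by
          rw [hff j]
          show lsum m (nn j) (a.1 + t • (a.1 - a'.1)) + yy j = _
          rw [lsum_point_add, lsum_smul, hz j]
          show lsum m (nn j) a.1 + t * 0 + yy j = lsum m (nn j) a.1 + yy j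
          ring
        rw [hcomp]
        exact (hPiff a.1).mp a.2 j
      exact (hPiff _).mpr h5
    have hcc : c = c' := by
      funext i
      obtain ⟨q, ⟨B₁, hB₁⟩, ⟨B₂, hB₂⟩⟩ := key_lemma m P hP hline (idelta m i)
      have hg : aff m q (-B₁) ∈ affNonneg m P :=
        ⟨⟨q, -B₁, rfl⟩, fun x hx => by rw [aff_apply]; linarith [hB₁ x hx]⟩
      have hg' : aff m (idelta m i + q) (-B₂) ∈ affNonneg m P :=
        ⟨⟨_, _, rfl⟩, fun x hx => by rw [aff_apply]; linarith [hB₂ x hx]⟩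
      have E1 := congrArg Prod.fst (congrFun heq ⟨aff m q (-B₁), hg⟩)
      have E2 := congrArg Prod.fst (congrFun heq ⟨aff m (idelta m i + q) (-B₂), hg'⟩)
      have hc1 : coeffOf m (aff m q (-B₁)) hg.1 = q := (coeffOf_eq m _ hg.1 q (-B₁) rfl).1
      have hc2 : coeffOf m (aff m (idelta m i + q) (-B₂)) hg'.1 = idelta m i + q :=
        (coeffOf_eq m _ hg'.1 _ (-B₂) rfl).1
      have E1' : (∏ j, c j ^ q j) = ∏ j, c' j ^ q j := by
        have : (∏ j, c j ^ (coeffOf m (aff m q (-B₁)) hg.1) j)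
            = ∏ j, c' j ^ (coeffOf m (aff m q (-B₁)) hg.1) j := E1
        rwa [hc1] at this
      have E2' : (∏ j, c j ^ ((idelta m i + q) j)) = ∏ j, c' j ^ ((idelta m i + q) j) := by
        have : (∏ j, c j ^ (coeffOf m (aff m (idelta m i + q) (-B₂)) hg'.1) j)
            = ∏ j, c' j ^ (coeffOf m (aff m (idelta m i + q) (-B₂)) hg'.1) j := E2
        rwa [hc2] at this
      rw [zpow_prod_split m i q c, zpow_prod_split m i q c', ← E1'] at E2'
      exact mul_right_cancel E2'
    rw [hcc, Subtype.ext haa]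
  · -- range
    apply Set.eq_of_subset_of_subset
    · rintro _ ⟨⟨c, a⟩, rfl⟩
      refine ⟨?_, ?_, ?_, ?_⟩
      · intro f g hfg
        have hrf := repr_eq m f.1 f.2.1
        have hrg := repr_eq m g.1 g.2.1
        have hsum : f.1 + g.1 = aff m (coeffOf m f.1 f.2.1 + coeffOf m g.1 g.2.1)
            (constOf m f.1 f.2.1 + constOf m g.1 g.2.1) := by
          conv_lhs => rw [hrf, hrg]
          rw [aff_add]
        have hc := (coeffOf_eq m _ hfg.1 _ _ hsum).1
        show (∏ i, c i ^ (coeffOf m (f.1 + g.1) hfg.1 i), (f.1 + g.1) a.1) = _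
        rw [hc]
        have hprod : (∏ i, c i ^ ((coeffOf m f.1 f.2.1 + coeffOf m g.1 g.2.1) i))
            = (∏ i, c i ^ (coeffOf m f.1 f.2.1 i)) * ∏ i, c i ^ (coeffOf m g.1 g.2.1 i) := by
          rw [← Finset.prod_mul_distrib]
          refine Finset.prod_congr rfl fun i _ => ?_
          show c i ^ (coeffOf m f.1 f.2.1 i + coeffOf m g.1 g.2.1 i) = _
          rw [zpow_add]
        rw [hprod]
        rfl
      · intro y hy
        have hc : coeffOf m (fun _ : Fin m → ℝ => y) hy.1 = 0 :=
          (coeffOf_eq m _ hy.1 0 y (const_eq_aff m y)).1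
        show (∏ i, c i ^ (coeffOf m (fun _ : Fin m → ℝ => y) hy.1 i), y) = (1, y)
        rw [hc]
        simp
      · intro f
        exact f.2.2 a.1 a.2
      · intro f hfpos
        exact hfpos.2 a.1 a.2
    · intro h hgood
      set a : Fin m → ℝ := ptOf m P hP hline h with hadef
      set c : Fin m → ℂˣ := cOf m P hP hline h with hcdef
      have hPc := hP
      obtain ⟨⟨x₀, hx₀⟩, k, f, strict, hIA, hPeq⟩ := hPc
      choose nn yy hff using hIA
      have hPiff : ∀ z : Fin m → ℝ, z ∈ P ↔
          ∀ j, (if strict j = true then 0 < f j z else 0 ≤ f j z) := by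
        intro z; rw [hPeq]; exact Iff.rfl
      have hmemf : ∀ j, f j ∈ affNonneg m P := by
        intro j
        refine ⟨⟨nn j, yy j, hff j⟩, fun x hx => ?_⟩
        have := (hPiff x).mp hx j
        split at this
        · exact this.le
        · exact this
      have haP : a ∈ P := by
        refine (hPiff a).mpr fun j => ?_
        have hval : f j a = (h ⟨f j, hmemf j⟩).2 := by
          have hc2 := central2 m P hP hline h hgood (f j) (hmemf j) (nn j) (yy j) (hff j)
          conv_lhs => rw [hff j]
          exact hc2.symm
        split
        · next hs =>
          rw [hval]
          refine hgood.2.2.2 ⟨f j, hmemf j⟩ ?_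
          refine ⟨⟨nn j, yy j, hff j⟩, fun x hx => ?_⟩
          have := (hPiff x).mp hx j
          rwa [if_pos hs] at this
        · rw [hval]
          exact hgood.2.2.1 _
      refine ⟨(c, ⟨a, haP⟩), ?_⟩
      funext F
      have hco := repr_eq m F.1 F.2.1
      have h2 : F.1 a = (h F).2 := by
        have hc2 := central2 m P hP hline h hgood F.1 F.2
          (coeffOf m F.1 F.2.1) (constOf m F.1 F.2.1) hco
        conv_lhs => rw [hco]
        rw [aff_apply]
        exact hc2.symm
      have h1 : (∏ i, c i ^ (coeffOf m F.1 F.2.1 i)) = (h F).1 :=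
        (central1 m P hP hline h hgood F.1 F.2
          (coeffOf m F.1 F.2.1) (constOf m F.1 F.2.1) hco).symm
      show (∏ i, c i ^ (coeffOf m F.1 F.2.1 i), F.1 a) = h F
      exact Prod.ext h1 h2
end
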